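/- Let A, M̃, M̂ be invertible real n×n matrices and define ξ̃ = inf_{0≠y∈ℝⁿ} |⟨A M̃⁻¹ y, y⟩|/⟨y,y⟩ and ξ̂ = inf_{0≠y∈ℝⁿ} |⟨A M̂⁻¹ y, y⟩|/⟨y,y⟩, and assume ξ̃ > 0 or ξ̂ > 0. Let r_k, r_{k−1}, r_half, r_half_prev ∈ ℝⁿ be nonzero vectors, set δ₁ = M̃⁻¹ r_k, δ₂ = M̃⁻¹(r_k − r_{k−1}) with A δ₁, A δ₂ linearly independent, and let r_half' be the residual obtained by the two-dimensional minimum residual update: r_half' = r_k − β₁ A δ₁ − β₂ A δ₂ with (β₁,β₂)ᵀ = W_A(δ₁,δ₂)⁻¹ (⟨r_k, Aδ₁⟩, ⟨r_k, Aδ₂⟩)ᵀ. Suppose r_half' = r_half. Similarly set δ₁' = M̂⁻¹ r_half, δ₂' = M̂⁻¹(r_half − r_half_prev) with A δ₁', A δ₂' linearly independent, and let r_{k+1} = r_half − γ₁ A δ₁' − γ₂ A δ₂' with (γ₁,γ₂)ᵀ = W_A(δ₁',δ₂')⁻¹ (⟨r_half, Aδ₁'⟩, ⟨r_half, Aδ₂'⟩)ᵀ.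 Define L̃ = ξ̃² ‖r_k‖² / (‖r_k‖² + ‖r_k − r_{k−1}‖²) and L̂ = ξ̂² ‖r_half‖² / (‖r_half‖² + ‖r_half − r_half_prev‖²), and L = sqrt(1 − L̃/‖A M̃⁻¹‖₂²) · sqrt(1 − L̂/‖A M̂⁻¹‖₂²). Then both quantities under the square roots are nonnegative, L < 1, and ‖r_{k+1}‖ ≤ L · ‖r_k‖. -/

import Mathlib

open Matrix
open scoped RealInnerProductSpace

/-!
Each half step replaces `r` by the residual `r'` of its orthogonal projection `p` onto
`span {A δ₁, A δ₂}`, which contains `u = A M⁻¹ r`. Hence `‖r‖² - ‖r'‖² = ‖p‖² ≥ ⟨r, u⟩² / ‖u‖²`,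
and `|⟨r, u⟩| ≥ ξ ‖r‖²`, `‖u‖ ≤ ‖A M⁻¹‖₂ ‖r‖` give `‖r'‖² ≤ (1 - ξ² / ‖A M⁻¹‖₂²) ‖r‖²`.
As `L̃ ≤ ξ²`, the theorem's factors are weaker, and two half steps compose. A factor is `< 1`
on the side where `ξ > 0`, since then `‖A M⁻¹‖₂ ≥ ξ > 0`.
-/

/-- Spectral (operator 2-) norm of a real matrix. -/
noncomputable def spec {m n : ℕ} (M : Matrix (Fin m) (Fin n) ℝ) : ℝ :=
  ‖LinearMap.toContinuousLinearMap (Matrix.toEuclideanLin M)‖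

/-- Action of a real matrix on Euclidean space. -/
noncomputable def mulE {m n : ℕ} (M : Matrix (Fin m) (Fin n) ℝ)
    (x : EuclideanSpace ℝ (Fin n)) : EuclideanSpace ℝ (Fin m) :=
  Matrix.toEuclideanLin M x

/-- The 2×2 Gram matrix `W_A(x, y)`. -/
noncomputable def gram {n : ℕ} (A : Matrix (Fin n) (Fin n) ℝ)
    (x y : EuclideanSpace ℝ (Fin n)) : Matrix (Fin 2) (Fin 2) ℝ :=
  !![⟪mulE A x, mulE A x⟫, ⟪mulE A y, mulE A x⟫;
     ⟪mulE A x, mulE A y⟫, ⟪mulE A y, mulE A y⟫]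

section MinResidual

variable {E ι : Type*} [NormedAddCommGroup E] [InnerProductSpace ℝ E] [Fintype ι]
  {v : ι → E} {r : E} {β : ι → ℝ}

lemma inner_sub_sum_smul_eq_zero (hβ : Matrix.gram ℝ v *ᵥ β = fun i => ⟪r, v i⟫) (j : ι) :
    ⟪r - ∑ i, β i • v i, v j⟫ = 0 := by
  have hj := congrFun hβ j
  simp only [mulVec, dotProduct, Matrix.gram_apply] at hj
  simp only [inner_sub_left, sum_inner, real_inner_smul_left, ← hj]
  simp only [real_inner_comm (v j), mul_comm, sub_self]

lemma sq_norm_eq_sq_norm_sub_sum_smul_add (hβ : Matrix.gram ℝ v *ᵥ β = fun i => ⟪r, v i⟫) :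
    ‖r‖ ^ 2 = ‖r - ∑ i, β i • v i‖ ^ 2 + ‖∑ i, β i • v i‖ ^ 2 := by
  have horth : ⟪r - ∑ i, β i • v i, ∑ i, β i • v i⟫ = 0 := by
    simp [inner_sum, real_inner_smul_right, inner_sub_sum_smul_eq_zero hβ]
  have h := norm_add_sq_real (r - ∑ i, β i • v i) (∑ i, β i • v i)
  rw [sub_add_cancel, horth] at h
  linarith

lemma inner_sq_le_of_gram_mulVec (hβ : Matrix.gram ℝ v *ᵥ β = fun i => ⟪r, v i⟫) (j : ι) :
    ⟪r, v j⟫ ^ 2 ≤ (‖r‖ ^ 2 - ‖r - ∑ i, β i • v i‖ ^ 2) * ‖v j‖ ^ 2 := by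
  have hproj : ⟪r, v j⟫ = ⟪∑ i, β i • v i, v j⟫ := by
    rw [← sub_eq_zero, ← inner_sub_left]; exact inner_sub_sum_smul_eq_zero hβ j
  rw [hproj, sq_norm_eq_sq_norm_sub_sum_smul_add hβ, add_sub_cancel_left, ← mul_pow, ← sq_abs]
  gcongr
  exact abs_real_inner_le_norm _ _

lemma sq_norm_le_one_sub_div_mul {r r' u : E} {ξ s : ℝ} (hξ : 0 ≤ ξ) (hr : r ≠ 0)
    (hlower : ξ * ‖r‖ ^ 2 ≤ |⟪r, u⟫|) (hupper : ‖u‖ ≤ s * ‖r‖) (hr' : ‖r'‖ ^ 2 ≤ ‖r‖ ^ 2)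
    (hstep : ⟪r, u⟫ ^ 2 ≤ (‖r‖ ^ 2 - ‖r'‖ ^ 2) * ‖u‖ ^ 2) :
    ‖r'‖ ^ 2 ≤ (1 - ξ ^ 2 / s ^ 2) * ‖r‖ ^ 2 := by
  have hr2 : 0 < ‖r‖ ^ 2 := by positivity
  have hdecr : 0 ≤ ‖r‖ ^ 2 - ‖r'‖ ^ 2 := sub_nonneg.mpr hr'
  have hkey : ξ ^ 2 * ‖r‖ ^ 2 ≤ (‖r‖ ^ 2 - ‖r'‖ ^ 2) * s ^ 2 := by
    refine le_of_mul_le_mul_right ?_ hr2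
    calc ξ ^ 2 * ‖r‖ ^ 2 * ‖r‖ ^ 2 = (ξ * ‖r‖ ^ 2) ^ 2 := by ring
      _ ≤ ⟪r, u⟫ ^ 2 := (pow_le_pow_left₀ (by positivity) hlower 2).trans_eq (sq_abs _)
      _ ≤ (‖r‖ ^ 2 - ‖r'‖ ^ 2) * (s * ‖r‖) ^ 2 := by
        refine hstep.trans ?_; gcongr
      _ = (‖r‖ ^ 2 - ‖r'‖ ^ 2) * s ^ 2 * ‖r‖ ^ 2 := by ring
  have := div_le_of_le_mul₀ (sq_nonneg _) hdecr hkey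
  rw [sub_mul, one_mul, div_mul_eq_mul_div]
  linarith

end MinResidual

section EuclideanMatrix

variable {n : ℕ}

lemma mulE_mul (A B : Matrix (Fin n) (Fin n) ℝ) (x : EuclideanSpace ℝ (Fin n)) :
    mulE (A * B) x = mulE A (mulE B x) := by
  simp [mulE, Matrix.toLpLin_apply, mulVec_mulVec]

lemma norm_mulE_le {m : ℕ} (B : Matrix (Fin m) (Fin n) ℝ) (x : EuclideanSpace ℝ (Fin n)) :
    ‖mulE B x‖ ≤ spec B * ‖x‖ :=
  (LinearMap.toContinuousLinearMap (Matrix.toEuclideanLin B)).le_opNorm x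

lemma gram_eq_matrix_gram (A : Matrix (Fin n) (Fin n) ℝ) (x y : EuclideanSpace ℝ (Fin n)) :
    _root_.gram A x y = Matrix.gram ℝ ![mulE A x, mulE A y] := by
  ext i j
  fin_cases i <;> fin_cases j <;> simp [_root_.gram, real_inner_comm]

/-- The paper's `ξ` for `B = A M⁻¹`. -/
noncomputable def innerNumericalRadius (B : Matrix (Fin n) (Fin n) ℝ) : ℝ :=
  ⨅ y : {y : EuclideanSpace ℝ (Fin n) // y ≠ 0}, |⟪mulE B y.1, y.1⟫| / ⟪y.1, y.1⟫

variable (B : Matrix (Fin n) (Fin n) ℝ)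

lemma innerNumericalRadius_nonneg : 0 ≤ innerNumericalRadius B :=
  Real.iInf_nonneg fun _ => div_nonneg (abs_nonneg _) real_inner_self_nonneg

lemma innerNumericalRadius_mul_sq_norm_le {r : EuclideanSpace ℝ (Fin n)} (hr : r ≠ 0) :
    innerNumericalRadius B * ‖r‖ ^ 2 ≤ |⟪mulE B r, r⟫| := by
  have hbdd : BddBelow (Set.range fun y : {y : EuclideanSpace ℝ (Fin n) // y ≠ 0} =>
      |⟪mulE B y.1, y.1⟫| / ⟪y.1, y.1⟫) :=
    ⟨0, by rintro _ ⟨y, rfl⟩; exact div_nonneg (abs_nonneg _) real_inner_self_nonneg⟩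
  have hle := ciInf_le hbdd ⟨r, hr⟩
  rw [real_inner_self_eq_norm_sq] at hle
  rwa [← le_div_iff₀ (by positivity)]

lemma innerNumericalRadius_le_spec {r : EuclideanSpace ℝ (Fin n)} (hr : r ≠ 0) :
    innerNumericalRadius B ≤ spec B := by
  have hr2 : 0 < ‖r‖ ^ 2 := by positivity
  refine le_of_mul_le_mul_right ?_ hr2
  calc innerNumericalRadius B * ‖r‖ ^ 2 ≤ |⟪mulE B r, r⟫| :=
        innerNumericalRadius_mul_sq_norm_le B hr
    _ ≤ ‖mulE B r‖ * ‖r‖ := abs_real_inner_le_norm _ _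
    _ ≤ spec B * ‖r‖ * ‖r‖ := by gcongr; exact norm_mulE_le B r
    _ = spec B * ‖r‖ ^ 2 := by ring

lemma one_sub_sq_innerNumericalRadius_div_nonneg {r : EuclideanSpace ℝ (Fin n)} (hr : r ≠ 0) :
    0 ≤ 1 - innerNumericalRadius B ^ 2 / spec B ^ 2 := by
  have hξs := innerNumericalRadius_le_spec B hr
  have hξ := innerNumericalRadius_nonneg B
  rw [sub_nonneg]
  exact div_le_one_of_le₀ (by gcongr) (sq_nonneg _)

lemma gram_mulVec_inv_mulVec (A : Matrix (Fin n) (Fin n) ℝ) {δ1 δ2 : EuclideanSpace ℝ (Fin n)}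
    (hind : LinearIndependent ℝ ![mulE A δ1, mulE A δ2]) (r : EuclideanSpace ℝ (Fin n)) :
    Matrix.gram ℝ ![mulE A δ1, mulE A δ2] *ᵥ
        ((_root_.gram A δ1 δ2)⁻¹ *ᵥ ![⟪r, mulE A δ1⟫, ⟪r, mulE A δ2⟫]) =
      fun i => ⟪r, ![mulE A δ1, mulE A δ2] i⟫ := by
  have hdet := (det_gram_ne_zero_iff_linearIndependent.mpr hind).isUnit
  rw [mulVec_mulVec, gram_eq_matrix_gram, mul_nonsing_inv _ hdet, one_mulVec]
  ext i; fin_cases i <;> rfl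

/-- The residual on the left is the minimal residual over `span {A δ₁, A δ₂}`; only the direction
`A δ₁ = A M⁻¹ r` enters the bound. -/
lemma sq_norm_minResidual_le (A M : Matrix (Fin n) (Fin n) ℝ) {r : EuclideanSpace ℝ (Fin n)}
    (hr : r ≠ 0) (δ1 δ2 : EuclideanSpace ℝ (Fin n)) (hδ1 : δ1 = mulE M⁻¹ r)
    (hind : LinearIndependent ℝ ![mulE A δ1, mulE A δ2]) :
    ‖r - ((_root_.gram A δ1 δ2)⁻¹ *ᵥ ![⟪r, mulE A δ1⟫, ⟪r, mulE A δ2⟫]) 0 • mulE A δ1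
        - ((_root_.gram A δ1 δ2)⁻¹ *ᵥ ![⟪r, mulE A δ1⟫, ⟪r, mulE A δ2⟫]) 1 • mulE A δ2‖ ^ 2
      ≤ (1 - innerNumericalRadius (A * M⁻¹) ^ 2 / spec (A * M⁻¹) ^ 2) * ‖r‖ ^ 2 := by
  have hnormal := gram_mulVec_inv_mulVec A hind r
  set v : Fin 2 → EuclideanSpace ℝ (Fin n) := ![mulE A δ1, mulE A δ2]
  set β := (_root_.gram A δ1 δ2)⁻¹ *ᵥ ![⟪r, mulE A δ1⟫, ⟪r, mulE A δ2⟫]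
  have hres : r - β 0 • mulE A δ1 - β 1 • mulE A δ2 = r - ∑ i, β i • v i := by
    simp [v, Fin.sum_univ_two, sub_sub]
  have hu : v 0 = mulE (A * M⁻¹) r := by simp [v, hδ1, mulE_mul]
  have hstep := inner_sq_le_of_gram_mulVec hnormal 0
  have hdecr : ‖r - ∑ i, β i • v i‖ ^ 2 ≤ ‖r‖ ^ 2 := by
    rw [sq_norm_eq_sq_norm_sub_sum_smul_add hnormal]
    exact le_add_of_nonneg_right (sq_nonneg _)
  rw [hres]
  rw [hu] at hstep
  refine sq_norm_le_one_sub_div_mul (innerNumericalRadius_nonneg _) hr ?_ (norm_mulE_le _ r)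
    hdecr hstep
  rw [real_inner_comm]
  exact innerNumericalRadius_mul_sq_norm_le _ hr

/-- The paper's `1 - L̃ / ‖A M̃⁻¹‖₂²`, for the half step from `r` with previous residual `rprev`. -/
noncomputable def halfStepRateSq (A M : Matrix (Fin n) (Fin n) ℝ)
    (r rprev : EuclideanSpace ℝ (Fin n)) : ℝ :=
  1 - innerNumericalRadius (A * M⁻¹) ^ 2 * ‖r‖ ^ 2 / (‖r‖ ^ 2 + ‖r - rprev‖ ^ 2) /
    spec (A * M⁻¹) ^ 2

variable (A M : Matrix (Fin n) (Fin n) ℝ) {r : EuclideanSpace ℝ (Fin n)}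
  (rprev : EuclideanSpace ℝ (Fin n))

lemma one_sub_div_le_halfStepRateSq :
    1 - innerNumericalRadius (A * M⁻¹) ^ 2 / spec (A * M⁻¹) ^ 2 ≤ halfStepRateSq A M r rprev := by
  have hL : innerNumericalRadius (A * M⁻¹) ^ 2 * ‖r‖ ^ 2 / (‖r‖ ^ 2 + ‖r - rprev‖ ^ 2)
      ≤ innerNumericalRadius (A * M⁻¹) ^ 2 :=
    div_le_of_le_mul₀ (by positivity) (sq_nonneg _)
      (mul_le_mul_of_nonneg_left (le_add_of_nonneg_right (sq_nonneg _)) (sq_nonneg _))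
  unfold halfStepRateSq
  gcongr

lemma halfStepRateSq_nonneg (hr : r ≠ 0) : 0 ≤ halfStepRateSq A M r rprev :=
  (one_sub_sq_innerNumericalRadius_div_nonneg _ hr).trans (one_sub_div_le_halfStepRateSq A M rprev)

lemma halfStepRateSq_le_one : halfStepRateSq A M r rprev ≤ 1 := by
  unfold halfStepRateSq
  have : 0 ≤ innerNumericalRadius (A * M⁻¹) ^ 2 * ‖r‖ ^ 2 / (‖r‖ ^ 2 + ‖r - rprev‖ ^ 2) /
      spec (A * M⁻¹) ^ 2 := by positivity
  linarith

lemma halfStepRateSq_lt_one (hr : r ≠ 0) (hξ : 0 < innerNumericalRadius (A * M⁻¹)) :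
    halfStepRateSq A M r rprev < 1 := by
  have hs : 0 < spec (A * M⁻¹) := hξ.trans_le (innerNumericalRadius_le_spec _ hr)
  unfold halfStepRateSq
  have : 0 < innerNumericalRadius (A * M⁻¹) ^ 2 * ‖r‖ ^ 2 / (‖r‖ ^ 2 + ‖r - rprev‖ ^ 2) /
      spec (A * M⁻¹) ^ 2 := by positivity
  linarith

end EuclideanMatrix

lemma le_sqrt_mul_sqrt_mul_of_sq_le {a b x y z : ℝ} (ha : 0 ≤ a) (hb : 0 ≤ b) (hx : 0 ≤ x)
    (hy : y ^ 2 ≤ a * x ^ 2) (hz : z ^ 2 ≤ b * y ^ 2) : z ≤ Real.sqrt a * Real.sqrt b * x := by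
  rw [← Real.sqrt_mul ha, ← Real.sqrt_sq hx, ← Real.sqrt_mul (mul_nonneg ha hb)]
  refine Real.le_sqrt_of_sq_le (hz.trans ?_)
  calc b * y ^ 2 ≤ b * (a * x ^ 2) := by gcongr
    _ = a * b * x ^ 2 := by ring

lemma sqrt_mul_sqrt_lt_one {x y : ℝ} (hx : 0 ≤ x) (hx1 : x ≤ 1) (hy : 0 ≤ y) (hy1 : y ≤ 1)
    (h : x < 1 ∨ y < 1) : Real.sqrt x * Real.sqrt y < 1 := by
  rw [← Real.sqrt_mul hx, Real.sqrt_lt' one_pos, one_pow]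
  rcases h with h | h <;> nlinarith

theorem stmt6_general {n : ℕ} (A Mt Mh : Matrix (Fin n) (Fin n) ℝ)
    (ξt ξh : ℝ)
    (hξt : ξt = ⨅ y : {y : EuclideanSpace ℝ (Fin n) // y ≠ 0},
      |⟪mulE (A * Mt⁻¹) y.1, y.1⟫| / ⟪y.1, y.1⟫)
    (hξh : ξh = ⨅ y : {y : EuclideanSpace ℝ (Fin n) // y ≠ 0},
      |⟪mulE (A * Mh⁻¹) y.1, y.1⟫| / ⟪y.1, y.1⟫)
    (hξpos : 0 < ξt ∨ 0 < ξh)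
    (rk rk1 rhalf rhalfp : EuclideanSpace ℝ (Fin n))
    (hrk : rk ≠ 0) (hrhalf : rhalf ≠ 0)
    (δ1 δ2 : EuclideanSpace ℝ (Fin n))
    (hδ1 : δ1 = mulE Mt⁻¹ rk)
    (hind : LinearIndependent ℝ ![mulE A δ1, mulE A δ2])
    (β : Fin 2 → ℝ)
    (hβ : β = (gram A δ1 δ2)⁻¹.mulVec ![⟪rk, mulE A δ1⟫, ⟪rk, mulE A δ2⟫])
    (hhalf : rhalf = rk - β 0 • mulE A δ1 - β 1 • mulE A δ2)
    (δ1' δ2' : EuclideanSpace ℝ (Fin n))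
    (hδ1' : δ1' = mulE Mh⁻¹ rhalf)
    (hind' : LinearIndependent ℝ ![mulE A δ1', mulE A δ2'])
    (γ : Fin 2 → ℝ)
    (hγ : γ = (gram A δ1' δ2')⁻¹.mulVec ![⟪rhalf, mulE A δ1'⟫, ⟪rhalf, mulE A δ2'⟫])
    (rnext : EuclideanSpace ℝ (Fin n))
    (hnext : rnext = rhalf - γ 0 • mulE A δ1' - γ 1 • mulE A δ2')
    (Lt Lh L : ℝ)
    (hLt : Lt = ξt ^ 2 * ‖rk‖ ^ 2 / (‖rk‖ ^ 2 + ‖rk - rk1‖ ^ 2))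
    (hLh : Lh = ξh ^ 2 * ‖rhalf‖ ^ 2 / (‖rhalf‖ ^ 2 + ‖rhalf - rhalfp‖ ^ 2))
    (hL : L = Real.sqrt (1 - Lt / spec (A * Mt⁻¹) ^ 2) *
              Real.sqrt (1 - Lh / spec (A * Mh⁻¹) ^ 2)) :
    0 ≤ 1 - Lt / spec (A * Mt⁻¹) ^ 2 ∧
    0 ≤ 1 - Lh / spec (A * Mh⁻¹) ^ 2 ∧
    L < 1 ∧ ‖rnext‖ ≤ L * ‖rk‖ := by
  have hrate_t : 1 - Lt / spec (A * Mt⁻¹) ^ 2 = halfStepRateSq A Mt rk rk1 := by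
    rw [hLt, hξt]; rfl
  have hrate_h : 1 - Lh / spec (A * Mh⁻¹) ^ 2 = halfStepRateSq A Mh rhalf rhalfp := by
    rw [hLh, hξh]; rfl
  have ht : ‖rhalf‖ ^ 2 ≤ halfStepRateSq A Mt rk rk1 * ‖rk‖ ^ 2 := by
    rw [hhalf, hβ]
    refine (sq_norm_minResidual_le A Mt hrk δ1 δ2 hδ1 hind).trans ?_
    gcongr; exact one_sub_div_le_halfStepRateSq A Mt rk1
  have hh : ‖rnext‖ ^ 2 ≤ halfStepRateSq A Mh rhalf rhalfp * ‖rhalf‖ ^ 2 := by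
    rw [hnext, hγ]
    refine (sq_norm_minResidual_le A Mh hrhalf δ1' δ2' hδ1' hind').trans ?_
    gcongr; exact one_sub_div_le_halfStepRateSq A Mh rhalfp
  have hdt := halfStepRateSq_nonneg A Mt rk1 hrk
  have hdh := halfStepRateSq_nonneg A Mh rhalfp hrhalf
  rw [hrate_t, hrate_h] at hL ⊢
  refine ⟨hdt, hdh, ?_, hL ▸ le_sqrt_mul_sqrt_mul_of_sq_le hdt hdh (norm_nonneg rk) ht hh⟩
  rw [hξt, hξh] at hξpos
  exact hL ▸ sqrt_mul_sqrt_lt_one hdt (halfStepRateSq_le_one ..) hdh (halfStepRateSq_le_one ..)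
    (hξpos.imp (halfStepRateSq_lt_one A Mt rk1 hrk) (halfStepRateSq_lt_one A Mh rhalfp hrhalf))

/-- Full-step residual reduction for the TSTMR iteration:
`‖r_{k+1}‖ ≤ L ‖r_k‖` with
`L = √(1 − L̃/‖A M̃⁻¹‖₂²) · √(1 − L̂/‖A M̂⁻¹‖₂²) < 1`, both radicands being nonnegative. -/
theorem stmt6 {n : ℕ} (A Mt Mh : Matrix (Fin n) (Fin n) ℝ)
    (hA : IsUnit A) (hMt : IsUnit Mt) (hMh : IsUnit Mh)
    (ξt ξh : ℝ)
    (hξt : ξt = ⨅ y : {y : EuclideanSpace ℝ (Fin n) // y ≠ 0},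
      |⟪mulE (A * Mt⁻¹) y.1, y.1⟫| / ⟪y.1, y.1⟫)
    (hξh : ξh = ⨅ y : {y : EuclideanSpace ℝ (Fin n) // y ≠ 0},
      |⟪mulE (A * Mh⁻¹) y.1, y.1⟫| / ⟪y.1, y.1⟫)
    (hξpos : 0 < ξt ∨ 0 < ξh)
    (rk rk1 rhalf rhalfp : EuclideanSpace ℝ (Fin n))
    (hrk : rk ≠ 0) (hrk1 : rk1 ≠ 0) (hrhalf : rhalf ≠ 0) (hrhalfp : rhalfp ≠ 0)
    (δ1 δ2 : EuclideanSpace ℝ (Fin n))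
    (hδ1 : δ1 = mulE Mt⁻¹ rk)
    (hδ2 : δ2 = mulE Mt⁻¹ (rk - rk1))
    (hind : LinearIndependent ℝ ![mulE A δ1, mulE A δ2])
    (β : Fin 2 → ℝ)
    (hβ : β = (gram A δ1 δ2)⁻¹.mulVec ![⟪rk, mulE A δ1⟫, ⟪rk, mulE A δ2⟫])
    (hhalf : rhalf = rk - β 0 • mulE A δ1 - β 1 • mulE A δ2)
    (δ1' δ2' : EuclideanSpace ℝ (Fin n))
    (hδ1' : δ1' = mulE Mh⁻¹ rhalf)
    (hδ2' : δ2' = mulE Mh⁻¹ (rhalf - rhalfp))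
    (hind' : LinearIndependent ℝ ![mulE A δ1', mulE A δ2'])
    (γ : Fin 2 → ℝ)
    (hγ : γ = (gram A δ1' δ2')⁻¹.mulVec ![⟪rhalf, mulE A δ1'⟫, ⟪rhalf, mulE A δ2'⟫])
    (rnext : EuclideanSpace ℝ (Fin n))
    (hnext : rnext = rhalf - γ 0 • mulE A δ1' - γ 1 • mulE A δ2')
    (Lt Lh L : ℝ)
    (hLt : Lt = ξt ^ 2 * ‖rk‖ ^ 2 / (‖rk‖ ^ 2 + ‖rk - rk1‖ ^ 2))
    (hLh : Lh = ξh ^ 2 * ‖rhalf‖ ^ 2 / (‖rhalf‖ ^ 2 + ‖rhalf - rhalfp‖ ^ 2))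
    (hL : L = Real.sqrt (1 - Lt / spec (A * Mt⁻¹) ^ 2) *
              Real.sqrt (1 - Lh / spec (A * Mh⁻¹) ^ 2)) :
    0 ≤ 1 - Lt / spec (A * Mt⁻¹) ^ 2 ∧
    0 ≤ 1 - Lh / spec (A * Mh⁻¹) ^ 2 ∧
    L < 1 ∧ ‖rnext‖ ≤ L * ‖rk‖ :=
  stmt6_general A Mt Mh ξt ξh hξt hξh hξpos rk rk1 rhalf rhalfp hrk hrhalf δ1 δ2 hδ1 hind β hβ hhalf
    δ1' δ2' hδ1' hind' γ hγ rnext hnext Lt Lh L hLt hLh hL
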